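/- For all integers p, q ≥ 2 and n ≥ 1, none of the following three elements of F₂ is a proper power: w₄ = a · b^{-(q+1)}; w₅ = (b⁻¹·a·b·a⁻¹)^n · a^{-p} · (a⁻¹·b·a·b⁻¹)^n · a⁻¹; w₆ = b^{q+1} · (b·a·b⁻¹·a⁻¹)^n · a^p · (b·a⁻¹·b⁻¹·a)^n. (These are the elements λμ⁻¹, νλ⁻¹ and μν⁻¹ of F₂ = π₁ of the handlebody complementary to the Seifert surface, arising from the second once-punctured torus for the knot K_n of Figure 3, where λ = a, μ = b^{q+1}, ν = (b⁻¹·a·b·a⁻¹)^n · a^{-p} · (a⁻¹·b·a·b⁻¹)^n.) -/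

import Mathlib

/-- The generator `a` of the free group on two generators. -/
def a : FreeGroup (Fin 2) := FreeGroup.of 0

/-- The generator `b` of the free group on two generators. -/
def b : FreeGroup (Fin 2) := FreeGroup.of 1

/-- An element of the free group on two generators is a proper power if it is a `k`-th
power for some integer `k ≥ 2`. -/
def IsProperPower (g : FreeGroup (Fin 2)) : Prop :=
  ∃ (w : FreeGroup (Fin 2)) (k : ℤ), 2 ≤ k ∧ g = w ^ k

/-!
`w₄` has exponent sum `1` in `a`, so it is not a proper power. For `h = w₅, w₆` we map `F₂` into
the affine group of `ℂ` so that `h` acts as a nontrivial translation, while every `g` acts with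
slope `ζ ^ χ g`, where `χ` is a weighted exponent sum with `χ h = ±N` and `ζ` is a primitive
`N`-th root of unity (`N = p + 1`, resp. `q + 1`). If `h = w ^ k` with `k ≥ 2`, then
`χ w = ±N / k` is not a multiple of `N`, so `w` acts with slope `≠ 1`, i.e. as a homothety. Its
powers are homotheties with the same centre, whereas a nontrivial translation fixes no point.
-/

open AffineEquiv Multiplicative

namespace AffineEquiv

@[simp] lemma inv_constVAdd {k V P : Type*} [Ring k] [AddCommGroup V] [Module k V]
    [AddTorsor V P] (v : V) : (constVAdd k P v)⁻¹ = constVAdd k P (-v) :=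
  constVAdd_symm k P v

section Slope

variable {K : Type*} [Field K]

def slopeHom : (K ≃ᵃ[K] K) →* Kˣ :=
  MonoidHom.toHomUnits
    { toFun := fun g => g.linear 1
      map_one' := rfl
      map_mul' := fun g h => by
        change g.linear (h.linear 1) = g.linear 1 * h.linear 1
        rw [mul_comm, ← smul_eq_mul (h.linear 1), ← map_smul, smul_eq_mul, mul_one] }

lemma coe_slopeHom_apply (g : K ≃ᵃ[K] K) : (slopeHom g : K) = g.linear 1 := rfl

@[simp] lemma slopeHom_constVAdd (t : K) : slopeHom (constVAdd K K t) = 1 := by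
  ext; rfl

@[simp] lemma slopeHom_homothetyUnitsMulHom (c : K) (r : Kˣ) :
    slopeHom (homothetyUnitsMulHom c r) = r := by
  ext
  rw [coe_slopeHom_apply]
  change (AffineMap.homothety c (r : K)).linear 1 = r
  simp [AffineMap.homothety_linear]

lemma homothetyUnitsMulHom_apply_eq (c : K) (r : Kˣ) (z : K) :
    homothetyUnitsMulHom c r z = r * (z - c) + c :=
  rfl

lemma inv_homothetyUnitsMulHom_apply_eq (c : K) (r : Kˣ) (z : K) :
    (homothetyUnitsMulHom c r)⁻¹ z = (r : K)⁻¹ * (z - c) + c := by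
  change AffineMap.homothety c ((r⁻¹ : Kˣ) : K) z = _
  rw [AffineMap.homothety_apply, Units.val_inv_eq_inv_val]
  rfl

lemma apply_eq_slopeHom_mul_add (g : K ≃ᵃ[K] K) (z : K) : g z = slopeHom g * z + g 0 := by
  have := g.map_vadd 0 z
  simp only [vadd_eq_add, add_zero] at this
  rw [this, coe_slopeHom_apply, mul_comm, ← smul_eq_mul, ← map_smul, smul_eq_mul, mul_one]

lemma exists_eq_homothetyUnitsMulHom_of_slopeHom_ne_one {g : K ≃ᵃ[K] K} (hg : slopeHom g ≠ 1) :
    ∃ c, g = homothetyUnitsMulHom c (slopeHom g) := by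
  have h : (1 : K) - slopeHom g ≠ 0 := sub_ne_zero.mpr (Ne.symm (mt Units.val_eq_one.mp hg))
  refine ⟨g 0 / (1 - slopeHom g), AffineEquiv.ext fun z => ?_⟩
  rw [apply_eq_slopeHom_mul_add, coe_homothetyUnitsMulHom_apply, AffineMap.homothety_apply]
  simp only [vsub_eq_sub, smul_eq_mul, vadd_eq_add]
  field_simp
  ring

lemma slopeHom_eq_one_of_zpow_eq_constVAdd {g : K ≃ᵃ[K] K} {k : ℤ} {t : K} (ht : t ≠ 0)
    (hg : g ^ k = constVAdd K K t) : slopeHom g = 1 := by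
  by_contra h
  obtain ⟨c, hc⟩ := exists_eq_homothetyUnitsMulHom_of_slopeHom_ne_one h
  have hfix := AffineMap.homothety_apply_same c ((slopeHom g ^ k : Kˣ) : K)
  rw [← coe_homothetyUnitsMulHom_apply, map_zpow (homothetyUnitsMulHom c), ← hc, hg,
    constVAdd_apply, vadd_eq_add, add_eq_right] at hfix
  exact ht hfix

end Slope

end AffineEquiv

namespace FreeGroup

variable {α : Type*}

def expSum (f : α → ℤ) : FreeGroup α →* Multiplicative ℤ :=
  lift fun i => ofAdd (f i)

@[simp] lemma expSum_of (f : α → ℤ) (i : α) : expSum f (of i) = ofAdd (f i) :=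
  lift_apply_of

end FreeGroup

lemma Complex.exists_isPrimitiveRoot_units {N : ℕ} (hN : N ≠ 0) :
    ∃ ζ : ℂˣ, IsPrimitiveRoot ζ N :=
  ⟨_, (Complex.isPrimitiveRoot_exp N hN).isUnit_unit hN⟩

lemma not_isProperPower_of_toAdd_eq_one (χ : FreeGroup (Fin 2) →* Multiplicative ℤ)
    {h : FreeGroup (Fin 2)} (hχ : (χ h).toAdd = 1) : ¬ IsProperPower h := by
  rintro ⟨w, k, hk, rfl⟩
  rw [map_zpow, toAdd_zpow, smul_eq_mul] at hχ
  have := Int.eq_one_or_neg_one_of_mul_eq_one hχ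
  omega

theorem not_isProperPower_of_map_eq_constVAdd {K : Type*} [Field K]
    (φ : FreeGroup (Fin 2) →* K ≃ᵃ[K] K) (χ : FreeGroup (Fin 2) →* Multiplicative ℤ) {ζ : Kˣ}
    (hφχ : slopeHom.comp φ = (zpowersHom Kˣ ζ).comp χ) {h : FreeGroup (Fin 2)}
    (hχh : (χ h).toAdd ≠ 0) (hζ : IsPrimitiveRoot ζ (χ h).toAdd.natAbs) {t : K} (ht : t ≠ 0)
    (hφh : φ h = constVAdd K K t) : ¬ IsProperPower h := by
  rintro ⟨w, k, hk, rfl⟩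
  rw [map_zpow] at hφh
  have hw : ζ ^ (χ w).toAdd = 1 := by
    simpa using (DFunLike.congr_fun hφχ w).symm.trans (slopeHom_eq_one_of_zpow_eq_constVAdd ht hφh)
  obtain ⟨m, hm⟩ := (hζ.zpow_eq_one_iff_dvd _).mp hw
  rw [map_zpow, toAdd_zpow, smul_eq_mul] at hm hχh
  have hx : (χ w).toAdd.natAbs ≠ 0 := Int.natAbs_ne_zero.mpr (right_ne_zero_of_mul hχh)
  have hdvd : (k * (χ w).toAdd).natAbs ∣ (χ w).toAdd.natAbs := Int.natCast_dvd.mp ⟨m, hm⟩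
  rw [Int.natAbs_mul] at hdvd
  have := Nat.le_of_dvd (Nat.pos_of_ne_zero hx) hdvd
  have : 2 ≤ k.natAbs := by omega
  nlinarith [Nat.pos_of_ne_zero hx]

theorem not_isProperPower_w₄ (q : ℤ) : ¬ IsProperPower (a * b ^ (-(q + 1))) :=
  not_isProperPower_of_toAdd_eq_one (FreeGroup.expSum ![1, 0]) (by simp [a, b])

section Representations

variable {K : Type*} [Field K]

-- Both generators act as homotheties of ratio `ξ`, so the commutators act as translations.
lemma lift_w₅_eq_constVAdd {p : ℤ} (n : ℤ) {ξ : Kˣ} (hξ : ξ ^ (p + 1) = 1) :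
    FreeGroup.lift ![homothetyUnitsMulHom 0 ξ, homothetyUnitsMulHom 1 ξ]
        ((b⁻¹ * a * b * a⁻¹) ^ n * a ^ (-p) * (a⁻¹ * b * a * b⁻¹) ^ n * a⁻¹) =
      constVAdd K K (n * (1 - (ξ : K)) ^ 2 * (1 - (ξ : K)⁻¹)) := by
  set φ : FreeGroup (Fin 2) →* K ≃ᵃ[K] K :=
    FreeGroup.lift ![homothetyUnitsMulHom 0 ξ, homothetyUnitsMulHom 1 ξ]
  have hφa : φ a = homothetyUnitsMulHom 0 ξ := FreeGroup.lift_apply_of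
  have hφb : φ b = homothetyUnitsMulHom 1 ξ := FreeGroup.lift_apply_of
  have hξp : ξ ^ (-p) = ξ := by
    rw [← mul_one (ξ ^ (-p)), ← hξ, ← zpow_add, neg_add_cancel_left, zpow_one]
  have hc₁ : φ (b⁻¹ * a * b * a⁻¹) = constVAdd K K ((1 - (ξ : K)) * (1 - (ξ : K)⁻¹)) := by
    simp only [map_mul, map_inv, hφa, hφb]
    ext z
    simp only [coe_mul, Function.comp_apply, homothetyUnitsMulHom_apply_eq,
      inv_homothetyUnitsMulHom_apply_eq, constVAdd_apply, vadd_eq_add]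
    field_simp
    ring
  have hc₂ : φ (a⁻¹ * b * a * b⁻¹) = constVAdd K K (-((1 - (ξ : K)) * (1 - (ξ : K)⁻¹))) := by
    simp only [map_mul, map_inv, hφa, hφb]
    ext z
    simp only [coe_mul, Function.comp_apply, homothetyUnitsMulHom_apply_eq,
      inv_homothetyUnitsMulHom_apply_eq, constVAdd_apply, vadd_eq_add]
    field_simp
    ring
  rw [map_mul, map_mul, map_mul, map_zpow, hc₁, map_zpow, hφa, map_zpow, hc₂, map_inv, hφa,
    ← constVAdd_zsmul, ← constVAdd_zsmul, ← map_zpow, hξp]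
  ext z
  simp only [coe_mul, Function.comp_apply, homothetyUnitsMulHom_apply_eq,
    inv_homothetyUnitsMulHom_apply_eq, constVAdd_apply, vadd_eq_add, zsmul_eq_mul]
  field_simp
  ring

lemma lift_w₆_eq_constVAdd (p : ℤ) {q : ℤ} (n : ℤ) {η : Kˣ} (hη : η ^ (q + 1) = 1) :
    FreeGroup.lift ![constVAdd K K 1, homothetyUnitsMulHom 0 η]
        (b ^ (q + 1) * (b * a * b⁻¹ * a⁻¹) ^ n * a ^ p * (b * a⁻¹ * b⁻¹ * a) ^ n) =
      constVAdd K K (p : K) := by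
  set φ : FreeGroup (Fin 2) →* K ≃ᵃ[K] K :=
    FreeGroup.lift ![constVAdd K K 1, homothetyUnitsMulHom 0 η]
  have hφa : φ a = constVAdd K K 1 := FreeGroup.lift_apply_of
  have hφb : φ b = homothetyUnitsMulHom 0 η := FreeGroup.lift_apply_of
  have hbq : φ (b ^ (q + 1)) = 1 := by
    rw [map_zpow, hφb, ← map_zpow, hη, map_one]
  have hc₁ : φ (b * a * b⁻¹ * a⁻¹) = constVAdd K K ((η : K) - 1) := by
    simp only [map_mul, map_inv, hφa, hφb]
    ext z
    simp only [coe_mul, Function.comp_apply, homothetyUnitsMulHom_apply_eq,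
      inv_homothetyUnitsMulHom_apply_eq, constVAdd_apply, inv_constVAdd, vadd_eq_add]
    field_simp
    ring
  have hc₂ : φ (b * a⁻¹ * b⁻¹ * a) = constVAdd K K (1 - (η : K)) := by
    simp only [map_mul, map_inv, hφa, hφb]
    ext z
    simp only [coe_mul, Function.comp_apply, homothetyUnitsMulHom_apply_eq,
      inv_homothetyUnitsMulHom_apply_eq, constVAdd_apply, inv_constVAdd, vadd_eq_add]
    field_simp
    ring
  rw [map_mul, map_mul, map_mul, hbq, one_mul, map_zpow, hc₁, map_zpow, hφa, map_zpow, hc₂,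
    ← constVAdd_zsmul, ← constVAdd_zsmul, ← constVAdd_zsmul]
  ext z
  simp only [coe_mul, Function.comp_apply, constVAdd_apply, vadd_eq_add, zsmul_eq_mul]
  ring

end Representations

theorem not_isProperPower_w₅ {p n : ℤ} (hp : 1 < |p + 1|) (hn : n ≠ 0) :
    ¬ IsProperPower ((b⁻¹ * a * b * a⁻¹) ^ n * a ^ (-p) * (a⁻¹ * b * a * b⁻¹) ^ n * a⁻¹) := by
  have hN : 1 < (p + 1).natAbs := by rw [Int.abs_eq_natAbs] at hp; omega
  obtain ⟨ξ, hξ⟩ := Complex.exists_isPrimitiveRoot_units (N := (p + 1).natAbs) (by omega)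
  have hξne : (ξ : ℂ) ≠ 1 := mt Units.val_eq_one.mp (hξ.ne_one hN)
  have hξ₁ : 1 - (ξ : ℂ) ≠ 0 := sub_ne_zero.mpr hξne.symm
  have hξ₁' : 1 - (ξ : ℂ)⁻¹ ≠ 0 := sub_ne_zero.mpr fun h => hξne (inv_eq_one.mp h.symm)
  have hχ : (FreeGroup.expSum ![1, 1]
      ((b⁻¹ * a * b * a⁻¹) ^ n * a ^ (-p) * (a⁻¹ * b * a * b⁻¹) ^ n * a⁻¹)).toAdd = -(p + 1) := by
    simp [a, b, add_comm]
  refine not_isProperPower_of_map_eq_constVAdd _ (FreeGroup.expSum ![1, 1]) (ζ := ξ) ?_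
    (by omega) (by rwa [hχ, Int.natAbs_neg])
    (mul_ne_zero (mul_ne_zero (by exact_mod_cast hn) (pow_ne_zero 2 hξ₁)) hξ₁')
    (lift_w₅_eq_constVAdd n ((hξ.zpow_eq_one_iff_dvd _).mpr Int.natAbs_dvd_self))
  refine FreeGroup.ext_hom _ _ fun i => ?_
  fin_cases i <;> simp

theorem not_isProperPower_w₆ {p q : ℤ} (n : ℤ) (hp : p ≠ 0) (hq : q + 1 ≠ 0) :
    ¬ IsProperPower (b ^ (q + 1) * (b * a * b⁻¹ * a⁻¹) ^ n * a ^ p * (b * a⁻¹ * b⁻¹ * a) ^ n) := by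
  obtain ⟨η, hη⟩ := Complex.exists_isPrimitiveRoot_units (Int.natAbs_ne_zero.mpr hq)
  have hχ : (FreeGroup.expSum ![0, 1]
      (b ^ (q + 1) * (b * a * b⁻¹ * a⁻¹) ^ n * a ^ p * (b * a⁻¹ * b⁻¹ * a) ^ n)).toAdd = q + 1 := by
    simp [a, b]
  refine not_isProperPower_of_map_eq_constVAdd _ (FreeGroup.expSum ![0, 1]) (ζ := η) ?_
    (by rwa [hχ]) (by rwa [hχ]) (Int.cast_ne_zero.mpr hp)
    (lift_w₆_eq_constVAdd p n ((hη.zpow_eq_one_iff_dvd _).mpr Int.natAbs_dvd_self))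
  refine FreeGroup.ext_hom _ _ fun i => ?_
  fin_cases i <;> simp

/-- For `p, q ≥ 2` and `n ≥ 1`, none of the elements `λμ⁻¹`, `νλ⁻¹`, `μν⁻¹` arising from the
second once-punctured torus for the knot `K_n` of Figure 3 is a proper power. -/
theorem stmt_5 (p q n : ℤ) (hp : 2 ≤ p) (hq : 2 ≤ q) (hn : 1 ≤ n) :
    ¬ IsProperPower (a * b ^ (-(q + 1))) ∧
    ¬ IsProperPower ((b⁻¹ * a * b * a⁻¹) ^ n * a ^ (-p) * (a⁻¹ * b * a * b⁻¹) ^ n * a⁻¹) ∧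
    ¬ IsProperPower (b ^ (q + 1) * (b * a * b⁻¹ * a⁻¹) ^ n * a ^ p * (b * a⁻¹ * b⁻¹ * a) ^ n) :=
  ⟨not_isProperPower_w₄ q,
    not_isProperPower_w₅ (by rw [abs_of_pos (by omega)]; omega) (by omega),
    not_isProperPower_w₆ n (by omega) (by omega)⟩
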